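/- arXiv:cs/0402012 — 3 statements merged into one kernel-verified Lean document; each statement's English description precedes it below -/
import Mathlib

section
/- Every system R with impermanent-strong failure detectors can be converted to a system R' with strong failure detectors, while preserving accuracy properties (if R satisfies weak accuracy then so does R', and if R satisfies strong accuracy then so does R'). In particular, the conversion that always outputs the union of all previously suspected processes accomplishes this. -/
/-! # Model: asynchronous message-passing systems with crash failures and
failure detectors (Halpern–Ricciardi). -/

/-- Events at a process: `send q msg`, `recv q msg` (peer `q`), `crash`,
`doAct α`, `initAct α`, and failure-detector events `suspect x` with report `x : FD`. -/
inductive Event (n : ℕ) (Msg Act FD : Type) where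
  | send    : Fin n → Msg → Event n Msg Act FD
  | recv    : Fin n → Msg → Event n Msg Act FD
  | crash   : Event n Msg Act FD
  | doAct   : Act → Event n Msg Act FD
  | initAct : Act → Event n Msg Act FD
  | suspect : FD → Event n Msg Act FD
  deriving DecidableEq

/-- A history is a finite sequence of events (oldest first). -/
abbrev History (n : ℕ) (Msg Act FD : Type) := List (Event n Msg Act FD)

/-- A run assigns to each time a cut, i.e. a history for each process. -/
abbrev Run (n : ℕ) (Msg Act FD : Type) := ℕ → Fin n → History n Msg Act FD

/-- Runs with standard failure-detector reports (sets of suspected processes). -/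
abbrev StdRun (n : ℕ) (Msg Act : Type) := Run n Msg Act (Finset (Fin n))

/-- Runs with generalized failure-detector reports `(S, k)`. -/
abbrev GenRun (n : ℕ) (Msg Act : Type) := Run n Msg Act (Finset (Fin n) × ℕ)

section Model

variable {n : ℕ} {Msg Act FD FD' : Type}
variable [DecidableEq Msg] [DecidableEq Act] [DecidableEq FD] [DecidableEq FD']

/-- Conditions R1–R5 on runs (R5 is fairness of communication). -/
def IsRun (r : Run n Msg Act FD) : Prop :=
  (∀ p, r 0 p = []) ∧
  (∀ p m, r (m+1) p = r m p ∨ ∃ e, r (m+1) p = r m p ++ [e]) ∧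
  (∀ p q msg m, Event.recv p msg ∈ r m q → Event.send q msg ∈ r m p) ∧
  (∀ p m, Event.crash ∈ r m p → ∃ h, r m p = h ++ [Event.crash]) ∧
  (∀ p q msg,
      (∀ N, ∃ m, N ≤ (r m p).count (Event.send q msg)) →
      (∃ m, Event.crash ∈ r m q) ∨
        (∀ N, ∃ m, N ≤ (r m q).count (Event.recv p msg)))

/-- Process `q` is faulty in run `r` iff `crash` is in `q`'s history. -/
def Faulty (r : Run n Msg Act FD) (q : Fin n) : Prop := ∃ m, Event.crash ∈ r m q

open Classical in
/-- `F(r)`: the set of faulty processes of run `r`. -/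
noncomputable def faultySet (r : Run n Msg Act FD) : Finset (Fin n) :=
  Finset.univ.filter (fun q => Faulty r q)

/-- Communication is reliable in `r`: every message sent by `p` to a process `q`
that never crashes is eventually received by `q` (count-wise). -/
def ReliableComm (r : Run n Msg Act FD) : Prop :=
  ∀ p q msg, ¬ Faulty r q →
    ∀ m, ∃ m', (r m p).count (Event.send q msg) ≤ (r m' q).count (Event.recv p msg)

/-- No failure-detector events occur in `r`. -/
def NoFDEvents (r : Run n Msg Act FD) : Prop :=
  ∀ p m x, Event.suspect x ∉ r m p

/-! ## Standard failure detectors -/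

/-- `Suspects_p(r,m)`: the report of the most recent failure-detector event in
`r_p(m)`, and `∅` if there is none. -/
def Suspects (r : StdRun n Msg Act) (p : Fin n) (m : ℕ) : Finset (Fin n) :=
  (r m p).foldl (fun acc e => match e with | Event.suspect S => S | _ => acc) ∅

/-- Strong accuracy: no process is suspected before it crashes. -/
def StrongAccuracyRun (r : StdRun n Msg Act) : Prop :=
  ∀ p q m, q ∈ Suspects r p m → Event.crash ∈ r m q

/-- Weak accuracy: if some process is correct, some correct process is never suspected. -/
def WeakAccuracyRun (r : StdRun n Msg Act) : Prop :=
  faultySet r ≠ Finset.univ →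
    ∃ q, ¬ Faulty r q ∧ ∀ p m, q ∉ Suspects r p m

/-- Strong completeness: every faulty process is eventually permanently suspected
by every correct process. -/
def StrongCompletenessRun (r : StdRun n Msg Act) : Prop :=
  ∀ p q, Faulty r q → ¬ Faulty r p → ∃ m, ∀ m' ≥ m, q ∈ Suspects r p m'

/-- Weak completeness. -/
def WeakCompletenessRun (r : StdRun n Msg Act) : Prop :=
  ∀ q, Faulty r q → faultySet r ≠ Finset.univ →
    ∃ p, ¬ Faulty r p ∧ ∃ m, ∀ m' ≥ m, q ∈ Suspects r p m'

/-- Impermanent strong completeness. -/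
def ImpStrongCompletenessRun (r : StdRun n Msg Act) : Prop :=
  ∀ p q, Faulty r q → ¬ Faulty r p → ∃ m, q ∈ Suspects r p m

/-- Impermanent weak completeness. -/
def ImpWeakCompletenessRun (r : StdRun n Msg Act) : Prop :=
  ∀ q, Faulty r q → faultySet r ≠ Finset.univ →
    ∃ p m, ¬ Faulty r p ∧ q ∈ Suspects r p m

/-! ## Generalized failure detectors -/

/-- `suspect_p(S,k)` is a `t`-useful failure-detector event for run `r`:
`F(r) ⊆ S`, `n - |S| > min(t,n-1) - k` (stated additively to avoid truncated
subtraction), and `k ≤ |S|`. -/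
def TUsefulEvent (t : ℕ) (r : GenRun n Msg Act) (S : Finset (Fin n)) (k : ℕ) : Prop :=
  faultySet r ⊆ S ∧ n + k > S.card + min t (n - 1) ∧ k ≤ S.card

/-- Generalized strong accuracy. -/
def GenAccuracyRun (r : GenRun n Msg Act) : Prop :=
  ∀ p m (S : Finset (Fin n)) k, Event.suspect (S, k) ∈ r m p →
    ∃ S' ⊆ S, S'.card = k ∧ ∀ q ∈ S', Event.crash ∈ r m q

/-- Generalized impermanent strong completeness (w.r.t. bound `t`). -/
def GenCompletenessRun (t : ℕ) (r : GenRun n Msg Act) : Prop :=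
  ∀ p, ¬ Faulty r p →
    ∃ m, ∃ S : Finset (Fin n), ∃ k, Event.suspect (S, k) ∈ r m p ∧ TUsefulEvent t r S k

/-! ## Protocols, contexts, and generated systems -/

/-- A joint protocol: for each process, a function from finite histories to actions
(identified with the corresponding events). -/
abbrev JointProtocol (n : ℕ) (Msg Act FD : Type) :=
  Fin n → History n Msg Act FD → Event n Msg Act FD

/-- Protocol events: sends and internal (`do`/`init`) events; receives, crashes
and failure-detector events are due to the environment. -/
def IsProtocolEvent : Event n Msg Act FD → Prop
  | Event.send _ _  => True
  | Event.doAct _   => True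
  | Event.initAct _ => True
  | _ => False

/-- A run is consistent with a joint protocol. -/
def Consistent (P : JointProtocol n Msg Act FD) (r : Run n Msg Act FD) : Prop :=
  ∀ p m e, r (m+1) p = r m p ++ [e] → IsProtocolEvent e → e = P p (r m p)

/-- `init_p(α)` may appear only in `p = owner α`'s history and at most once per run. -/
def InitOK (ow : Act → Fin n) (r : Run n Msg Act FD) : Prop :=
  ∀ p m α, Event.initAct α ∈ r m p →
    ow α = p ∧ (r m p).count (Event.initAct α) ≤ 1

/-- The system generated by joint protocol `P` in context `C` (a context is
identified with the set of runs satisfying its constraints): all runs satisfying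
R1–R5, the `init` constraints, and the constraints of the context, that are
consistent with the protocol. -/
def Generated (ow : Act → Fin n) (C : Set (Run n Msg Act FD))
    (P : JointProtocol n Msg Act FD) : Set (Run n Msg Act FD) :=
  {r | IsRun r ∧ InitOK ow r ∧ r ∈ C ∧ Consistent P r}

/-! ## UDC and nUDC -/

/-- UDC of action `α` owned by `p` in system `R` (conditions DC1–DC3). -/
def UDCof (R : Set (Run n Msg Act FD)) (p : Fin n) (α : Act) : Prop :=
  (∀ r ∈ R, ∀ m, Event.initAct α ∈ r m p →
      ∃ m' ≥ m, Event.doAct α ∈ r m' p ∨ Event.crash ∈ r m' p) ∧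
  (∀ r ∈ R, ∀ q₁ q₂ m, Event.doAct α ∈ r m q₁ →
      ∃ m' ≥ m, Event.doAct α ∈ r m' q₂ ∨ Event.crash ∈ r m' q₂) ∧
  (∀ r ∈ R, ∀ q m, Event.doAct α ∈ r m q → Event.initAct α ∈ r m p)

/-- nUDC of action `α` owned by `p` (conditions DC1, DC2', DC3). -/
def NUDCof (R : Set (Run n Msg Act FD)) (p : Fin n) (α : Act) : Prop :=
  (∀ r ∈ R, ∀ m, Event.initAct α ∈ r m p →
      ∃ m' ≥ m, Event.doAct α ∈ r m' p ∨ Event.crash ∈ r m' p) ∧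
  (∀ r ∈ R, ∀ q₁ q₂ m, Event.doAct α ∈ r m q₁ →
      ∃ m' ≥ m, Event.doAct α ∈ r m' q₂ ∨ Event.crash ∈ r m' q₂ ∨
        Event.crash ∈ r m' q₁) ∧
  (∀ r ∈ R, ∀ q m, Event.doAct α ∈ r m q → Event.initAct α ∈ r m p)

/-- `R` attains UDC: UDC of every coordination action. -/
def AttainsUDC (ow : Act → Fin n) (R : Set (Run n Msg Act FD)) : Prop :=
  ∀ α, UDCof R (ow α) α

/-- `R` attains nUDC: nUDC of every coordination action. -/
def AttainsNUDC (ow : Act → Fin n) (R : Set (Run n Msg Act FD)) : Prop :=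
  ∀ α, NUDCof R (ow α) α

/-! ## Conversions between systems -/

/-- Re-tag a non-failure-detector event; failure-detector events are dropped. -/
def mapNonFD : Event n Msg Act FD → Option (Event n Msg Act FD')
  | Event.send q msg => some (Event.send q msg)
  | Event.recv q msg => some (Event.recv q msg)
  | Event.crash => some Event.crash
  | Event.doAct a => some (Event.doAct a)
  | Event.initAct a => some (Event.initAct a)
  | Event.suspect _ => none

/-- `f` converts system `R` to system `R'`: `R' = f '' R`, each `f r` is a run,
and all events of `r` except possibly failure-detector events appear in `f r`
in the same order as in `r` (with possibly additional events). -/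
def IsConversion (f : Run n Msg Act FD → Run n Msg Act FD')
    (R : Set (Run n Msg Act FD)) (R' : Set (Run n Msg Act FD')) : Prop :=
  R' = f '' R ∧
  ∀ r ∈ R, IsRun (f r) ∧
    ∀ p m, ∃ m',
      ((r m p).filterMap (mapNonFD (FD' := Unit))).Sublist
        ((f r m' p).filterMap (mapNonFD (FD' := Unit)))


/-- Accumulating-union transformation of a single history: each failure-detector
event is replaced by one reporting the union of all processes suspected so far. -/
def unionHist : Finset (Fin n) → History n Msg Act (Finset (Fin n)) →
    History n Msg Act (Finset (Fin n))
  | _, [] => []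
  | acc, Event.suspect S :: rest => Event.suspect (acc ∪ S) :: unionHist (acc ∪ S) rest
  | acc, e :: rest => e :: unionHist acc rest

/-- The conversion that always outputs the union of all previously suspected
processes. -/
def unionConvert (r : StdRun n Msg Act) : StdRun n Msg Act :=
  fun m p => unionHist ∅ (r m p)

/-! ## Knowledge and temporal semantics (shallow embedding) -/

/-- `(R,r,m) ⊨ K_p φ`. -/
def Knows (R : Set (Run n Msg Act FD)) (p : Fin n)
    (φ : Run n Msg Act FD → ℕ → Prop) (r : Run n Msg Act FD) (m : ℕ) : Prop :=
  ∀ r' ∈ R, ∀ m', r' m' p = r m p → φ r' m'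

/-- `(R,r,m) ⊨ □φ`. -/
def AlwaysP (φ : Run n Msg Act FD → ℕ → Prop) (r : Run n Msg Act FD) (m : ℕ) : Prop :=
  ∀ m' ≥ m, φ r m'

/-- `(R,r,m) ⊨ ◇φ`. -/
def EventuallyP (φ : Run n Msg Act FD → ℕ → Prop) (r : Run n Msg Act FD) (m : ℕ) : Prop :=
  ∃ m' ≥ m, φ r m'

/-- `φ` is stable in `R`: once true, it remains true. -/
def StableIn (R : Set (Run n Msg Act FD)) (φ : Run n Msg Act FD → ℕ → Prop) : Prop :=
  ∀ r ∈ R, ∀ m, φ r m → ∀ m' ≥ m, φ r m'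

/-- `φ` is local to `p` in `R`: at every point, `p` knows whether `φ` holds. -/
def LocalTo (R : Set (Run n Msg Act FD)) (p : Fin n)
    (φ : Run n Msg Act FD → ℕ → Prop) : Prop :=
  ∀ r ∈ R, ∀ m, Knows R p φ r m ∨ Knows R p (fun r' m' => ¬ φ r' m') r m

/-- `φ` is insensitive to failure by `q` in `R`. -/
def Insensitive (R : Set (Run n Msg Act FD)) (q : Fin n)
    (φ : Run n Msg Act FD → ℕ → Prop) : Prop :=
  ∀ r ∈ R, ∀ r' ∈ R, ∀ m m', r' m' q = r m q ++ [Event.crash] →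
    (φ r m ↔ φ r' m')

/-- Run `r'` extends the point `(r,m)`. -/
def Extends (r' r : Run n Msg Act FD) (m : ℕ) : Prop :=
  ∀ m' ≤ m, ∀ p, r' m' p = r m' p

/-! ## Conditions A1–A5 -/

/-- A1: failures are independent of other events. -/
def CondA1 (R : Set (Run n Msg Act FD)) : Prop :=
  ∀ S : Finset (Fin n),
    (∃ rS ∈ R, ∀ q ∈ S, Faulty rS q) →
    ∀ r ∈ R, ∀ m, (∀ q, q ∉ S → Event.crash ∉ r m q) →
      ∃ r' ∈ R, Extends r' r m ∧ faultySet r' = S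

/-- A2. -/
def CondA2 (R : Set (Run n Msg Act FD)) : Prop :=
  ∀ r₁ ∈ R, ∀ r₂ ∈ R, ∀ m : ℕ, faultySet r₁ = faultySet r₂ →
    (∀ q, q ∉ faultySet r₁ → r₁ m q = r₂ m q) →
    ∃ r₁' ∈ R, ∃ r₂' ∈ R, Extends r₁' r₁ m ∧ Extends r₂' r₂ m ∧
      (∀ q ∈ faultySet r₁, Event.crash ∈ r₁' (m+1) q ∧ Event.crash ∈ r₂' (m+1) q) ∧
      (∀ m' ≥ m, ∀ q, q ∉ faultySet r₁ → r₁' m' q = r₂' m' q)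

/-- A3: `K_q init_p(α)` is insensitive to failure by `q`. -/
def CondA3 (ow : Act → Fin n) (R : Set (Run n Msg Act FD)) : Prop :=
  ∀ (p q : Fin n) (α : Act), ow α = p →
    Insensitive R q
      (fun r m => Knows R q (fun r' m' => Event.initAct α ∈ r' m' p) r m)

/-- A4. -/
def CondA4 (R : Set (Run n Msg Act FD)) : Prop :=
  ∀ (φ : Run n Msg Act FD → ℕ → Prop) (p : Fin n),
    StableIn R φ → LocalTo R p φ → Insensitive R p φ →
    ∀ r ∈ R, ∀ m : ℕ, ∀ S : Finset (Fin n), S.Nonempty →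
      (∀ q ∈ S, ¬ Knows R q φ r m) →
      ∃ r' ∈ R,
        (∀ q ∈ S, r' m q = r m q) ∧
        (∀ q, q ∉ S → ∃ h, h <+: r m q ∧
          (r' m q = h ∨ (r' m q = h ++ [Event.crash] ∧ Event.crash ∈ r m q))) ∧
        ¬ φ r' m

/-- A5ₜ: every set of at most `t` processes is exactly the faulty set of some run. -/
def CondA5 (R : Set (Run n Msg Act FD)) (t : ℕ) : Prop :=
  ∀ S : Finset (Fin n), S.card ≤ t → ∃ rS ∈ R, faultySet rS = S

/-! ## The simulations R^f and R^{f'} -/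

open Classical in
/-- The set of processes that `p` knows (in `R` at `(r,m)`) to have crashed. -/
noncomputable def KCrashSet (R : Set (Run n Msg Act FD)) (r : Run n Msg Act FD)
    (m : ℕ) (p : Fin n) : Finset (Fin n) :=
  Finset.univ.filter (fun q => Knows R p (fun r' m' => Event.crash ∈ r' m' q) r m)

/-- `p`'s history in `f(r)` (conditions P1–P3): at odd times the new failure
detector reports the processes `p` knows to have crashed; at even times the
next non-failure-detector event of `r` (if any) is appended. -/
noncomputable def fHist (R : Set (Run n Msg Act FD)) (r : Run n Msg Act FD)
    (p : Fin n) : ℕ → History n Msg Act (Finset (Fin n))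
  | 0 => []
  | (m+1) =>
    if m % 2 = 0 then
      fHist R r p m ++ [Event.suspect (KCrashSet R r (m/2) p)]
    else
      fHist R r p m ++ ((r (m/2 + 1) p).drop ((r (m/2) p).length)).filterMap mapNonFD

/-- The run `f(r)`. -/
noncomputable def fRun (R : Set (Run n Msg Act FD)) (r : Run n Msg Act FD) :
    StdRun n Msg Act :=
  fun m p => fHist R r p m

/-- The system `R^f = {f(r) : r ∈ R}`. -/
noncomputable def RfSystem (R : Set (Run n Msg Act FD)) : Set (StdRun n Msg Act) :=
  fRun R '' R

open Classical in
/-- The largest `k'` such that at every point with the same local history for `p`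
as `(r,m)`, at least `k'` processes of `S` have crashed. -/
noncomputable def kMax (R : Set (Run n Msg Act FD)) (r : Run n Msg Act FD)
    (m : ℕ) (p : Fin n) (S : Finset (Fin n)) : ℕ :=
  sSup {k' : ℕ | ∀ r'' ∈ R, ∀ m'', r'' m'' p = r m p →
    k' ≤ (S.filter (fun q => Event.crash ∈ r'' m'' q)).card}

/-- `p`'s history in `f'(r)` (conditions P1, P2, P3'), relative to an enumeration
`enum` of the subsets of `Proc`. -/
noncomputable def f'Hist (R : Set (Run n Msg Act FD)) (enum : ℕ → Finset (Fin n))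
    (r : Run n Msg Act FD) (p : Fin n) : ℕ → History n Msg Act (Finset (Fin n) × ℕ)
  | 0 => []
  | (m+1) =>
    if m % 2 = 0 then
      f'Hist R enum r p m ++
        [Event.suspect (enum ((r (m/2 + 1) p).length % 2 ^ n),
          kMax R r (m/2) p (enum ((r (m/2 + 1) p).length % 2 ^ n)))]
    else
      f'Hist R enum r p m ++ ((r (m/2 + 1) p).drop ((r (m/2) p).length)).filterMap mapNonFD

/-- The run `f'(r)`. -/
noncomputable def f'Run (R : Set (Run n Msg Act FD)) (enum : ℕ → Finset (Fin n))
    (r : Run n Msg Act FD) : GenRun n Msg Act :=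
  fun m p => f'Hist R enum r p m

/-- The system `R^{f'} = {f'(r) : r ∈ R}`. -/
noncomputable def Rf'System (R : Set (Run n Msg Act FD)) (enum : ℕ → Finset (Fin n)) :
    Set (GenRun n Msg Act) :=
  f'Run R enum '' R

/-- Infinitely many `init` events appear in `r`. -/
def InfInits (r : Run n Msg Act FD) : Prop :=
  ∀ N, ∃ m, N ≤ ∑ p, (r m p).countP (fun e => match e with | Event.initAct _ => true | _ => false)

end Model

/-! The converted detector reports at time `m` the union of all reports the original detector
has issued up to time `m`. So a process suspected once stays suspected from then on, which turns
impermanent strong completeness into strong completeness; a process the original detector never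
suspects is never reported; and as crashes are never undone, a union of reports that each name
only crashed processes names only crashed processes. -/

section Histories

variable {n : ℕ} {Msg Act FD : Type}

def lastReport (i : FD) (h : History n Msg Act FD) : FD :=
  h.foldl (fun acc e => match e with | Event.suspect x => x | _ => acc) i

theorem suspects_eq_lastReport (r : StdRun n Msg Act) (p : Fin n) (m : ℕ) :
    Suspects r p m = lastReport ∅ (r m p) := by
  unfold Suspects lastReport
  congr 1
  funext acc e
  cases e <;> rfl

theorem lastReport_append (i : FD) (h₁ h₂ : History n Msg Act FD) :
    lastReport i (h₁ ++ h₂) = lastReport (lastReport i h₁) h₂ :=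
  List.foldl_append ..

theorem lastReport_append_suspect (i x : FD) (h : History n Msg Act FD) :
    lastReport i (h ++ [Event.suspect x]) = x := by
  rw [lastReport_append]; rfl

theorem lastReport_eq_or_suspect_mem (i : FD) (h : History n Msg Act FD) :
    lastReport i h = i ∨ Event.suspect (lastReport i h) ∈ h := by
  induction h generalizing i with
  | nil => exact Or.inl rfl
  | cons e t ih =>
    cases e
    case suspect x =>
      rcases ih x with hx | hmem
      · exact Or.inr (by simp only [lastReport, List.foldl_cons] at hx ⊢; simp [hx])
      · exact Or.inr (List.mem_cons_of_mem _ hmem)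
    all_goals exact (ih i).imp id (List.mem_cons_of_mem _)

def reportUnion (acc : Finset (Fin n)) (h : History n Msg Act (Finset (Fin n))) :
    Finset (Fin n) :=
  h.foldl (fun a e => match e with | Event.suspect S => a ∪ S | _ => a) acc

theorem mem_reportUnion {q : Fin n} {acc : Finset (Fin n)}
    {h : History n Msg Act (Finset (Fin n))} :
    q ∈ reportUnion acc h ↔ q ∈ acc ∨ ∃ S, Event.suspect S ∈ h ∧ q ∈ S := by
  induction h generalizing acc with
  | nil => simp [reportUnion]
  | cons e t ih =>
    cases e
    all_goals
      simp only [reportUnion, List.foldl_cons] at ih ⊢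
      rw [ih]
    case suspect S => grind
    all_goals simp

theorem unionHist_append (acc : Finset (Fin n)) (h₁ h₂ : History n Msg Act (Finset (Fin n))) :
    unionHist acc (h₁ ++ h₂) = unionHist acc h₁ ++ unionHist (reportUnion acc h₁) h₂ := by
  induction h₁ generalizing acc with
  | nil => rfl
  | cons e t ih => cases e <;> simp only [List.cons_append, unionHist, ih] <;> rfl

theorem lastReport_unionHist (acc : Finset (Fin n)) (h : History n Msg Act (Finset (Fin n))) :
    lastReport acc (unionHist acc h) = reportUnion acc h := by
  induction h generalizing acc with
  | nil => rfl
  | cons e t ih => cases e <;> exact ih _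

theorem filterMap_mapNonFD_unionHist {FD' : Type} (acc : Finset (Fin n))
    (h : History n Msg Act (Finset (Fin n))) :
    (unionHist acc h).filterMap (mapNonFD (FD' := FD')) = h.filterMap mapNonFD := by
  induction h generalizing acc with
  | nil => rfl
  | cons e t ih => cases e <;> simp only [unionHist, List.filterMap_cons, mapNonFD, ih]

theorem count_unionHist [DecidableEq Msg] [DecidableEq Act]
    {e : Event n Msg Act (Finset (Fin n))} (he : ∀ S, e ≠ Event.suspect S)
    (acc : Finset (Fin n)) (h : History n Msg Act (Finset (Fin n))) :
    (unionHist acc h).count e = h.count e := by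
  induction h generalizing acc with
  | nil => rfl
  | cons e' t ih =>
    cases e' <;> simp only [unionHist, List.count_cons, ih, beq_iff_eq]
    case suspect S => grind

theorem mem_unionHist {e : Event n Msg Act (Finset (Fin n))} (he : ∀ S, e ≠ Event.suspect S)
    (acc : Finset (Fin n)) (h : History n Msg Act (Finset (Fin n))) :
    e ∈ unionHist acc h ↔ e ∈ h := by
  classical
  rw [← List.count_pos_iff, ← List.count_pos_iff, count_unionHist he]

end Histories

section Runs

variable {n : ℕ} {Msg Act FD : Type} [DecidableEq Msg] [DecidableEq Act] [DecidableEq FD]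
  {r : Run n Msg Act FD}

theorem IsRun.prefix_of_le (hr : IsRun r) (p : Fin n) {m m' : ℕ} (hle : m ≤ m') :
    r m p <+: r m' p := by
  induction m', hle using Nat.le_induction with
  | base => exact List.prefix_refl _
  | succ m' _ ih =>
    rcases hr.2.1 p m' with h | ⟨e, h⟩
    · rwa [h]
    · rw [h]; exact ih.trans (List.prefix_append _ _)

theorem IsRun.exists_eq_append_of_mem (hr : IsRun r) {p : Fin n} {m : ℕ}
    {e : Event n Msg Act FD} (he : e ∈ r m p) : ∃ m₀ ≤ m, ∃ h, r m₀ p = h ++ [e] := by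
  induction m with
  | zero => simp [hr.1 p] at he
  | succ m ih =>
    rcases hr.2.1 p m with h | ⟨e', h⟩
    · rw [h] at he
      obtain ⟨m₀, hm₀, hm₀'⟩ := ih he
      exact ⟨m₀, hm₀.trans m.le_succ, hm₀'⟩
    · rw [h, List.mem_append, List.mem_singleton] at he
      rcases he with he | rfl
      · obtain ⟨m₀, hm₀, hm₀'⟩ := ih he
        exact ⟨m₀, hm₀.trans m.le_succ, hm₀'⟩
      · exact ⟨m + 1, le_rfl, r m p, h⟩

end Runs

section UnionConvert

variable {n : ℕ} {Msg Act : Type} {r : StdRun n Msg Act}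

theorem crash_mem_unionConvert {m : ℕ} {q : Fin n} :
    Event.crash ∈ unionConvert r m q ↔ Event.crash ∈ r m q :=
  mem_unionHist (fun _ => by simp) _ _

theorem faulty_unionConvert {q : Fin n} : Faulty (unionConvert r) q ↔ Faulty r q :=
  exists_congr fun _ => crash_mem_unionConvert

theorem faultySet_unionConvert : faultySet (unionConvert r) = faultySet r := by
  ext q
  simp [faultySet, faulty_unionConvert]

variable [DecidableEq Msg] [DecidableEq Act]

theorem count_unionConvert {e : Event n Msg Act (Finset (Fin n))}
    (he : ∀ S, e ≠ Event.suspect S) (m : ℕ) (p : Fin n) :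
    (unionConvert r m p).count e = (r m p).count e :=
  count_unionHist he _ _

theorem IsRun.mem_suspects_unionConvert_iff (hr : IsRun r) {p q : Fin n} {m : ℕ} :
    q ∈ Suspects (unionConvert r) p m ↔ ∃ m₀ ≤ m, q ∈ Suspects r p m₀ := by
  simp only [suspects_eq_lastReport, unionConvert, lastReport_unionHist, mem_reportUnion,
    Finset.notMem_empty, false_or]
  constructor
  · rintro ⟨S, hS, hq⟩
    obtain ⟨m₀, hm₀, h, hh⟩ := hr.exists_eq_append_of_mem hS
    exact ⟨m₀, hm₀, by rwa [hh, lastReport_append_suspect]⟩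
  · rintro ⟨m₀, hm₀, hq⟩
    rcases lastReport_eq_or_suspect_mem ∅ (r m₀ p) with h | h
    · simp [h] at hq
    · exact ⟨_, (hr.prefix_of_le p hm₀).subset h, hq⟩

theorem isRun_unionConvert (hr : IsRun r) : IsRun (unionConvert r) := by
  obtain ⟨hinit, hstep, hrecv, hcrash, hfair⟩ := hr
  refine ⟨fun p => by simp [unionConvert, hinit p, unionHist], fun p m => ?_,
    fun p q msg m hmsg => ?_, fun p m hp => ?_, fun p q msg hsend => ?_⟩
  · rcases hstep p m with h | ⟨e, h⟩
    · exact Or.inl (by simp only [unionConvert, h])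
    · refine Or.inr ?_
      simp only [unionConvert, h, unionHist_append]
      cases e <;> exact ⟨_, rfl⟩
  · exact (mem_unionHist (fun _ => by simp) _ _).mpr
      (hrecv p q msg m ((mem_unionHist (fun _ => by simp) _ _).mp hmsg))
  · obtain ⟨h, hh⟩ := hcrash p m (crash_mem_unionConvert.mp hp)
    exact ⟨unionHist ∅ h, by simp only [unionConvert, hh, unionHist_append]; rfl⟩
  · simp only [count_unionConvert (r := r) (e := Event.send q msg) (fun _ => by simp),
      count_unionConvert (r := r) (e := Event.recv p msg) (fun _ => by simp)] at hsend ⊢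
    simpa only [Faulty, crash_mem_unionConvert] using hfair p q msg hsend

theorem IsRun.strongCompletenessRun_unionConvert (hr : IsRun r)
    (hc : ImpStrongCompletenessRun r) : StrongCompletenessRun (unionConvert r) := by
  intro p q hq hp
  rw [faulty_unionConvert] at hq hp
  obtain ⟨m, hm⟩ := hc p q hq hp
  exact ⟨m, fun m' hm' => hr.mem_suspects_unionConvert_iff.mpr ⟨m, hm', hm⟩⟩

theorem IsRun.weakAccuracyRun_unionConvert (hr : IsRun r) (hw : WeakAccuracyRun r) :
    WeakAccuracyRun (unionConvert r) := by
  intro hne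
  rw [faultySet_unionConvert] at hne
  obtain ⟨q, hq, hnever⟩ := hw hne
  refine ⟨q, by rwa [faulty_unionConvert], fun p m hqm => ?_⟩
  obtain ⟨m₀, -, hm₀⟩ := hr.mem_suspects_unionConvert_iff.mp hqm
  exact hnever p m₀ hm₀

theorem IsRun.strongAccuracyRun_unionConvert (hr : IsRun r) (hs : StrongAccuracyRun r) :
    StrongAccuracyRun (unionConvert r) := by
  intro p q m hqm
  obtain ⟨m₀, hm₀, hq⟩ := hr.mem_suspects_unionConvert_iff.mp hqm
  exact crash_mem_unionConvert.mpr ((hr.prefix_of_le q hm₀).subset (hs p q m₀ hq))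

theorem isConversion_unionConvert {R : Set (StdRun n Msg Act)} (hR : ∀ r ∈ R, IsRun r) :
    IsConversion unionConvert R (unionConvert '' R) :=
  ⟨rfl, fun r hr => ⟨isRun_unionConvert (hR r hr), fun p m =>
    ⟨m, by rw [unionConvert, filterMap_mapNonFD_unionHist]⟩⟩⟩

end UnionConvert

/-- Every system with impermanent-strong failure detectors can be
converted to one with strong failure detectors, preserving accuracy properties;
in particular the conversion `unionConvert`, which always outputs the union of
all previously suspected processes, accomplishes this. -/
theorem impermanent_strong_to_strong_conversion
    (n : ℕ) (Msg Act : Type) [DecidableEq Msg] [DecidableEq Act]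
    (R : Set (StdRun n Msg Act)) (hR : ∀ r ∈ R, IsRun r)
    (hFD : ∀ r ∈ R, ImpStrongCompletenessRun r ∧ WeakAccuracyRun r) :
    (∃ (f : StdRun n Msg Act → StdRun n Msg Act) (R' : Set (StdRun n Msg Act)),
      IsConversion f R R' ∧
      (∀ r' ∈ R', StrongCompletenessRun r') ∧
      ((∀ r ∈ R, WeakAccuracyRun r) → ∀ r' ∈ R', WeakAccuracyRun r') ∧
      ((∀ r ∈ R, StrongAccuracyRun r) → ∀ r' ∈ R', StrongAccuracyRun r')) ∧
    (IsConversion unionConvert R (unionConvert '' R) ∧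
      (∀ r' ∈ unionConvert '' R, StrongCompletenessRun r') ∧
      ((∀ r ∈ R, WeakAccuracyRun r) →
        ∀ r' ∈ unionConvert '' R, WeakAccuracyRun r') ∧
      ((∀ r ∈ R, StrongAccuracyRun r) →
        ∀ r' ∈ unionConvert '' R, StrongAccuracyRun r')) := by
  refine ⟨⟨unionConvert, _, ?union⟩, ?union⟩
  refine ⟨isConversion_unionConvert hR, ?_, ?_, ?_⟩
  · rintro _ ⟨r, hr, rfl⟩
    exact IsRun.strongCompletenessRun_unionConvert (hR r hr) (hFD r hr).1
  · rintro hw _ ⟨r, hr, rfl⟩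
    exact IsRun.weakAccuracyRun_unionConvert (hR r hr) (hw r hr)
  · rintro hs _ ⟨r, hr, rfl⟩
    exact IsRun.strongAccuracyRun_unionConvert (hR r hr) (hs r hr)
end

section
/- If a system R satisfies A1 and A5_{n−1}, then R satisfies weak accuracy if and only if R satisfies strong accuracy. -/
/-- If a system `R` satisfies A1 and A5_{n-1}, then `R` satisfies
weak accuracy iff it satisfies strong accuracy. -/
theorem weak_accuracy_iff_strong_accuracy
    (n : ℕ) (Msg Act : Type) [DecidableEq Msg] [DecidableEq Act]
    (R : Set (StdRun n Msg Act)) (hR : ∀ r ∈ R, IsRun r)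
    (hA1 : CondA1 R) (hA5 : CondA5 R (n - 1)) :
    (∀ r ∈ R, WeakAccuracyRun r) ↔ (∀ r ∈ R, StrongAccuracyRun r) := by
  constructor
  · intro hweak r hr p q m hq
    by_contra hcr
    set S : Finset (Fin n) := Finset.univ \ {q} with hS
    have hScard : S.card ≤ n - 1 := by
      have h1 : S.card = n - 1 := by
        rw [hS, Finset.card_sdiff_of_subset (Finset.singleton_subset_iff.mpr (Finset.mem_univ q))]
        simp
      exact h1.le
    obtain ⟨rS, hrS, hfS⟩ := hA5 S hScard
    have hex : ∃ rS ∈ R, ∀ q' ∈ S, Faulty rS q' := by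
      refine ⟨rS, hrS, fun q' hq' => ?_⟩
      have hmem : q' ∈ faultySet rS := hfS ▸ hq'
      simpa [faultySet] using hmem
    obtain ⟨r', hr', hext, hfr'⟩ := hA1 S hex r hr m (fun q' hq' => by
      have hq'q : q' = q := by
        by_contra hnq
        exact hq' (by simp [hS, hnq])
      subst hq'q; exact hcr)
    have hne : faultySet r' ≠ Finset.univ := by
      rw [hfr']
      intro h
      have hqS : q ∈ S := h ▸ Finset.mem_univ q
      simp [hS] at hqS
    obtain ⟨q', hq'corr, hq'ns⟩ := hweak r' hr' hne
    have hq'q : q' = q := by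
      have hnm : q' ∉ faultySet r' := by simp [faultySet, hq'corr]
      rw [hfr'] at hnm
      by_contra hnq
      exact hnm (by simp [hS, hnq])
    subst hq'q
    have heq : r' m p = r m p := hext m le_rfl p
    have hsusp : Suspects r' p m = Suspects r p m := by
      simp [Suspects, heq]
    exact hq'ns p m (hsusp ▸ hq)
  · intro hstrong r hr hne
    have hex : ∃ q, q ∉ faultySet r := by
      by_contra h
      push_neg at h
      exact hne (Finset.eq_univ_iff_forall.mpr h)
    obtain ⟨q, hq⟩ := hex
    have hqnf : ¬ Faulty r q := by simpa [faultySet] using hq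
    refine ⟨q, hqnf, fun p m hmem => ?_⟩
    exact hqnf ⟨m, hstrong r hr p q m hmem⟩
end

section
/- If a system R satisfies A1 and A5_{n−1}, then R has strong failure detectors if and only if R has perfect failure detectors. -/
/-- If a system `R` satisfies A1 and A5_{n-1}, then `R` has strong
failure detectors iff it has perfect failure detectors. -/
theorem strong_FDs_iff_perfect_FDs
    (n : ℕ) (Msg Act : Type) [DecidableEq Msg] [DecidableEq Act]
    (R : Set (StdRun n Msg Act)) (hR : ∀ r ∈ R, IsRun r)
    (hA1 : CondA1 R) (hA5 : CondA5 R (n - 1)) :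
    (∀ r ∈ R, StrongCompletenessRun r ∧ WeakAccuracyRun r) ↔
      (∀ r ∈ R, StrongCompletenessRun r ∧ StrongAccuracyRun r) := by
  constructor
  · -- weak accuracy ⇒ strong accuracy, using A1 and A5_{n-1}
    intro h r hr
    refine ⟨(h r hr).1, ?_⟩
    intro p q m hq
    by_contra hcr
    -- crash all processes except q
    set S : Finset (Fin n) := Finset.univ.erase q with hS
    have hcard : S.card ≤ n - 1 := by
      simp [hS, Finset.card_erase_of_mem, Finset.card_univ]
    obtain ⟨rS, hrS, hrSfault⟩ := hA5 S hcard
    have hex : ∃ rS ∈ R, ∀ q' ∈ S, Faulty rS q' := by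
      refine ⟨rS, hrS, fun q' hq' => ?_⟩
      have : q' ∈ faultySet rS := hrSfault ▸ hq'
      simpa [faultySet] using this
    have hnc : ∀ q', q' ∉ S → Event.crash ∉ r m q' := by
      intro q' hq'
      have : q' = q := by
        by_contra hne
        exact hq' (Finset.mem_erase.mpr ⟨hne, Finset.mem_univ q'⟩)
      subst this; exact hcr
    obtain ⟨r', hr', hext, hfault⟩ := hA1 S hex r hr m hnc
    -- q is correct in r', and everyone else is faulty
    have hqS : q ∉ S := Finset.notMem_erase q _
    have hfne : faultySet r' ≠ Finset.univ := by
      rw [hfault]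
      intro hcontra
      exact hqS (hcontra ▸ Finset.mem_univ q)
    obtain ⟨q₀, hq₀c, hq₀n⟩ := (h r' hr').2 hfne
    have hq₀ : q₀ = q := by
      have : q₀ ∉ faultySet r' := by
        simp [faultySet, hq₀c]
      rw [hfault, hS] at this
      by_contra hne
      exact this (Finset.mem_erase.mpr ⟨hne, Finset.mem_univ q₀⟩)
    subst hq₀
    -- but q is suspected at (r', m) since r' m p = r m p
    have hsame : r' m p = r m p := hext m le_rfl p
    have : q₀ ∈ Suspects r' p m := by
      unfold Suspects
      rw [hsame]
      exact hq
    exact hq₀n p m this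
  · -- strong accuracy ⇒ weak accuracy
    intro h r hr
    refine ⟨(h r hr).1, ?_⟩
    intro hne
    have : ∃ q, ¬ Faulty r q := by
      by_contra hc
      push_neg at hc
      apply hne
      ext q
      simp [faultySet, hc q]
    obtain ⟨q, hqc⟩ := this
    refine ⟨q, hqc, fun p m hqs => ?_⟩
    exact hqc ⟨m, (h r hr).2 p q m hqs⟩
end
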